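/- Suppose there exist constants T > e∗, C_T > 1 and θ ∈ (0,1) such that every solution t ↦ x(t) of the evolution family Φ satisfies: (a) |x(t)| ≤ C_T·|x(s)| whenever e∗ ≤ s ≤ t ≤ s∗T, and (b) |x(t)| ≤ θ·sup{|x(u)| : u ∈ J, |u∗t^{∗-1}|∗ ≤ T} for all t ≥ T. Then, with K = θ⁻¹·C_T and α = −ln(θ)/ln(h(T)) (so K ≥ 1 and α > 0), every solution t ↦ x(t) that is bounded on [e∗, +∞) satisfies |x(t)| ≤ K·(h(t)/h(s))^{-α}·|x(s)| for all t ≥ s ≥ e∗. -/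

import Mathlib

open Set

noncomputable section

/-- The operation `t ∗ s := h⁻¹ (h t · h s)` on `J`. -/
def star (h hinv : ℝ → ℝ) (t s : ℝ) : ℝ := hinv (h t * h s)

/-- The unit element `e∗ := h⁻¹ 1`. -/
def estar (hinv : ℝ → ℝ) : ℝ := hinv 1

/-- The inverse `t^{∗-1} := h⁻¹ (1 / h t)`. -/
def sinv (h hinv : ℝ → ℝ) (t : ℝ) : ℝ := hinv (1 / h t)

/-- The absolute value `|t|∗ := t` if `e∗ ≤ t` and `t^{∗-1}` otherwise. -/
def absStar (h hinv : ℝ → ℝ) (t : ℝ) : ℝ := if estar hinv ≤ t then t else sinv h hinv t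

/-- `h : J → (0,∞)` is a growth rate: a strictly increasing homeomorphism of
`J = (a₀,∞)` (or `J = ℝ`) onto `(0,∞)`, with (two-sided) inverse `hinv`. -/
structure GrowthRate (J : Set ℝ) (h hinv : ℝ → ℝ) : Prop where
  J_eq : (∃ a₀ : ℝ, J = Set.Ioi a₀) ∨ J = Set.univ
  mono : StrictMonoOn h J
  cont : ContinuousOn h J
  pos : ∀ t ∈ J, 0 < h t
  inv_left : ∀ t ∈ J, hinv (h t) = t
  inv_mem : ∀ y ∈ Set.Ioi (0:ℝ), hinv y ∈ J
  inv_right : ∀ y ∈ Set.Ioi (0:ℝ), h (hinv y) = y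
  inv_cont : ContinuousOn hinv (Set.Ioi 0)

variable {E : Type*} [NormedAddCommGroup E] [NormedSpace ℝ E]

/-- An evolution family on `J`: `Φ t t = I` and `Φ t u ∘ Φ u s = Φ t s`. -/
def IsEvolutionFamily (J : Set ℝ) (Φ : ℝ → ℝ → (E →L[ℝ] E)) : Prop :=
  (∀ t ∈ J, Φ t t = 1) ∧ (∀ t ∈ J, ∀ u ∈ J, ∀ s ∈ J, Φ t u * Φ u s = Φ t s)

/-- `Φ` has a uniform `h`-dichotomy on `I` with projections `P` and constants `K, α`. -/
def HasUHDWith (I : Set ℝ) (h : ℝ → ℝ) (Φ : ℝ → ℝ → (E →L[ℝ] E))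
    (P : ℝ → (E →L[ℝ] E)) (K α : ℝ) : Prop :=
  (∀ t ∈ I, P t * P t = P t) ∧
  (∀ t ∈ I, ∀ s ∈ I, P t * Φ t s = Φ t s * P s) ∧
  (∀ s ∈ I, ∀ t ∈ I, s ≤ t → ‖Φ t s * P s‖ ≤ K * (h t / h s) ^ (-α)) ∧
  (∀ s ∈ I, ∀ t ∈ I, t ≤ s → ‖Φ t s * (1 - P s)‖ ≤ K * (h s / h t) ^ (-α))

/-- `Φ` has a uniform `h`-dichotomy on `I`. -/
def HasUHD (I : Set ℝ) (h : ℝ → ℝ) (Φ : ℝ → ℝ → (E →L[ℝ] E)) : Prop :=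
  ∃ K ≥ (1:ℝ), ∃ α > (0:ℝ), ∃ P : ℝ → (E →L[ℝ] E), HasUHDWith I h Φ P K α

/-- Uniform bounded `h`-growth on `I`: every solution satisfies
`|x t| ≤ C |x s|` for `s ∈ I` and `t ∈ [s, s∗T] ∩ I`. -/
def UnifBoundedHGrowth (J I : Set ℝ) (h hinv : ℝ → ℝ) (Φ : ℝ → ℝ → (E →L[ℝ] E)) : Prop :=
  ∃ T > estar hinv, ∃ C ≥ (1:ℝ), ∀ s₀ ∈ J, ∀ ξ : E, ∀ s ∈ I, ∀ t ∈ I,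
    s ≤ t → t ≤ star h hinv s T → ‖(Φ t s₀) ξ‖ ≤ C * ‖(Φ s s₀) ξ‖

/-- Uniform bounded `h`-decay on `I`: every solution satisfies
`|x t| ≤ C |x s|` for `s ∈ I` and `t ∈ [s∗T^{∗-1}, s] ∩ I`. -/
def UnifBoundedHDecay (J I : Set ℝ) (h hinv : ℝ → ℝ) (Φ : ℝ → ℝ → (E →L[ℝ] E)) : Prop :=
  ∃ T > estar hinv, ∃ C ≥ (1:ℝ), ∀ s₀ ∈ J, ∀ ξ : E, ∀ s ∈ I, ∀ t ∈ I,
    star h hinv s (sinv h hinv T) ≤ t → t ≤ s → ‖(Φ t s₀) ξ‖ ≤ C * ‖(Φ s s₀) ξ‖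

/-- Uniform bounded `h`-growth and `h`-decay on `I`: every solution satisfies
`|x t| ≤ C |x s|` for `s ∈ I` and `t ∈ [s∗T^{∗-1}, s∗T] ∩ I`. -/
def UnifBoundedHGrowthDecay (J I : Set ℝ) (h hinv : ℝ → ℝ) (Φ : ℝ → ℝ → (E →L[ℝ] E)) : Prop :=
  ∃ T > estar hinv, ∃ C ≥ (1:ℝ), ∀ s₀ ∈ J, ∀ ξ : E, ∀ s ∈ I, ∀ t ∈ I,
    star h hinv s (sinv h hinv T) ≤ t → t ≤ star h hinv s T → ‖(Φ t s₀) ξ‖ ≤ C * ‖(Φ s s₀) ξ‖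

/-- `Φ` is uniformly `h`-noncritical on `[e∗,∞)`: there are `T > e∗` and `θ ∈ (0,1)` with
`|x t| ≤ θ · sup {|x u| : u ∈ J, |u ∗ t^{∗-1}|∗ ≤ T}` for all `t ≥ T`, for every solution. -/
def UnifHNoncritical (J : Set ℝ) (h hinv : ℝ → ℝ) (Φ : ℝ → ℝ → (E →L[ℝ] E)) : Prop :=
  ∃ T > estar hinv, ∃ θ : ℝ, 0 < θ ∧ θ < 1 ∧
    ∀ s₀ ∈ J, ∀ ξ : E, ∀ t, T ≤ t →
      ‖(Φ t s₀) ξ‖ ≤ θ * sSup ((fun u => ‖(Φ u s₀) ξ‖) ''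
        {u | u ∈ J ∧ absStar h hinv (star h hinv u (sinv h hinv t)) ≤ T})

/-- `Φ` is `h`-expansive on `I`: there are `L, β > 0` such that every solution satisfies
`|x t| ≤ L (h(t∗a^{∗-1})^{-β} |x a| + h(b∗t^{∗-1})^{-β} |x b|)` for `[a,b] ⊆ I`, `a ≤ t ≤ b`. -/
def HExpansive (J I : Set ℝ) (h hinv : ℝ → ℝ) (Φ : ℝ → ℝ → (E →L[ℝ] E)) : Prop :=
  ∃ L > (0:ℝ), ∃ β > (0:ℝ), ∀ s₀ ∈ J, ∀ ξ : E, ∀ a ∈ I, ∀ b ∈ I, ∀ t, a ≤ t → t ≤ b →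
    ‖(Φ t s₀) ξ‖ ≤ L * ((h (star h hinv t (sinv h hinv a))) ^ (-β) * ‖(Φ a s₀) ξ‖ +
      (h (star h hinv b (sinv h hinv t))) ^ (-β) * ‖(Φ b s₀) ξ‖)

/-! Write `M a` for the supremum of `|x u|` over `u ≥ a`, finite because `x` is bounded.
Hypothesis (b) at a point `σ ≥ a ∗ T` only involves points `u` with `h u ≥ h σ / h T ≥ h a`,
so `M (a ∗ T) ≤ θ M a`. Splitting `[a, ∞)` at `a ∗ T`, hypothesis (a) gives
`M a ≤ max (C |x a|) (θ M a)`, hence `M a ≤ C |x a|`. Iterating, `|x t| ≤ M (s ∗ Tⁿ) ≤ θⁿ C |x s|`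
for the largest `n` with `h(T)ⁿ ≤ h t / h s`, and `θⁿ⁺¹ ≤ (h t / h s)^(-α)` by the choice of `α`. -/

open Real

theorem exists_pow_le_and_pow_succ_le_rpow {r l θ : ℝ} (hr : 1 ≤ r) (hl : 1 < l)
    (hθ0 : 0 < θ) (hθ1 : θ ≤ 1) :
    ∃ n : ℕ, l ^ n ≤ r ∧ θ ^ (n + 1) ≤ r ^ (log θ / log l) := by
  have hq : 0 ≤ logb l r := logb_nonneg hl hr
  refine ⟨⌊logb l r⌋₊, ?_, ?_⟩
  · rw [← rpow_natCast, ← le_logb_iff_rpow_le hl (by linarith)]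
    exact Nat.floor_le hq
  · have hswap : r ^ (log θ / log l) = θ ^ logb l r := by
      rw [rpow_def_of_pos (by linarith), rpow_def_of_pos hθ0, logb]
      ring_nf
    rw [hswap, ← rpow_natCast]
    exact rpow_le_rpow_of_exponent_ge hθ0 hθ1 (by push_cast; exact (Nat.lt_floor_add_one _).le)

theorem apply_iterate_le_pow_mul {α : Type*} {S : Set α} {φ : α → α} (hφ : MapsTo φ S S)
    {M : α → ℝ} {θ : ℝ} (hθ : 0 ≤ θ) (hM : ∀ a ∈ S, M (φ a) ≤ θ * M a) {a : α} (ha : a ∈ S) :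
    ∀ n : ℕ, M (φ^[n] a) ≤ θ ^ n * M a
  | 0 => by simp
  | n + 1 => by
    rw [Function.iterate_succ_apply', pow_succ', mul_assoc]
    exact (hM _ (hφ.iterate n ha)).trans (mul_le_mul_of_nonneg_left
      (apply_iterate_le_pow_mul hφ hθ hM ha n) hθ)

def tailSup (f : ℝ → ℝ) (a : ℝ) : ℝ := sSup (f '' Ici a)

theorem le_tailSup {f : ℝ → ℝ} {a u : ℝ} (hf : BddAbove (f '' Ici a)) (hu : a ≤ u) :
    f u ≤ tailSup f a :=
  le_csSup hf (mem_image_of_mem f hu)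

theorem tailSup_le {f : ℝ → ℝ} {a c : ℝ} (hc : ∀ u, a ≤ u → f u ≤ c) : tailSup f a ≤ c :=
  csSup_le (nonempty_Ici.image f) (forall_mem_image.mpr hc)

theorem tailSup_le_of_forall_le_of_tailSup_le {f : ℝ → ℝ} {a b c θ : ℝ}
    (hf : BddAbove (f '' Ici a)) (hab : a ≤ b) (hθ : θ < 1) (hc : 0 ≤ c)
    (hnear : ∀ t, a ≤ t → t ≤ b → f t ≤ c) (hfar : tailSup f b ≤ θ * tailSup f a) :
    tailSup f a ≤ c := by
  have hmax : tailSup f a ≤ max c (θ * tailSup f a) := by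
    refine tailSup_le fun t hat => ?_
    rcases le_or_gt t b with htb | hbt
    · exact le_max_of_le_left (hnear t hat htb)
    · exact le_max_of_le_right ((le_tailSup (hf.mono (image_mono (Ici_subset_Ici.mpr hab)))
        hbt.le).trans hfar)
  rcases le_max_iff.mp hmax with hle | hle
  · exact hle
  · nlinarith

def starBall (J : Set ℝ) (h hinv : ℝ → ℝ) (t T : ℝ) : Set ℝ :=
  {u | u ∈ J ∧ absStar h hinv (star h hinv u (sinv h hinv t)) ≤ T}

theorem star_comm (h hinv : ℝ → ℝ) (u v : ℝ) : star h hinv u v = star h hinv v u := by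
  rw [_root_.star, _root_.star, mul_comm]

namespace GrowthRate

variable {J : Set ℝ} {h hinv : ℝ → ℝ} (hgr : GrowthRate J h hinv)
include hgr

theorem Ici_subset {a : ℝ} (ha : a ∈ J) : Ici a ⊆ J := by
  rcases hgr.J_eq with ⟨a₀, rfl⟩ | rfl
  · exact fun u hu => mem_Ioi.mpr ((mem_Ioi.mp ha).trans_le hu)
  · exact subset_univ _

theorem h_le_h_iff {u v : ℝ} (hu : u ∈ J) (hv : v ∈ J) : h u ≤ h v ↔ u ≤ v :=
  hgr.mono.le_iff_le hu hv

theorem hinv_mem {y : ℝ} (hy : 0 < y) : hinv y ∈ J := hgr.inv_mem y hy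

theorem h_hinv {y : ℝ} (hy : 0 < y) : h (hinv y) = y := hgr.inv_right y hy

theorem estar_mem : estar hinv ∈ J := hgr.hinv_mem one_pos

theorem h_estar : h (estar hinv) = 1 := hgr.h_hinv one_pos

theorem mem_of_estar_le {u : ℝ} (hu : estar hinv ≤ u) : u ∈ J :=
  hgr.Ici_subset hgr.estar_mem hu

theorem estar_le_iff {u : ℝ} (hu : u ∈ J) : estar hinv ≤ u ↔ 1 ≤ h u := by
  rw [← hgr.h_le_h_iff hgr.estar_mem hu, hgr.h_estar]

theorem star_mem {u v : ℝ} (hu : u ∈ J) (hv : v ∈ J) : star h hinv u v ∈ J :=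
  hgr.hinv_mem (mul_pos (hgr.pos u hu) (hgr.pos v hv))

theorem h_star {u v : ℝ} (hu : u ∈ J) (hv : v ∈ J) : h (star h hinv u v) = h u * h v :=
  hgr.h_hinv (mul_pos (hgr.pos u hu) (hgr.pos v hv))

theorem sinv_mem {u : ℝ} (hu : u ∈ J) : sinv h hinv u ∈ J :=
  hgr.hinv_mem (one_div_pos.mpr (hgr.pos u hu))

theorem h_sinv {u : ℝ} (hu : u ∈ J) : h (sinv h hinv u) = (h u)⁻¹ := by
  rw [sinv, hgr.h_hinv (one_div_pos.mpr (hgr.pos u hu)), one_div]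

theorem star_sinv_self {u : ℝ} (hu : u ∈ J) : star h hinv u (sinv h hinv u) = estar hinv := by
  rw [_root_.star, hgr.h_sinv hu, mul_inv_cancel₀ (hgr.pos u hu).ne', estar]

theorem absStar_mem {w : ℝ} (hw : w ∈ J) : absStar h hinv w ∈ J := by
  unfold absStar
  split_ifs
  exacts [hw, hgr.sinv_mem hw]

theorem h_absStar {w : ℝ} (hw : w ∈ J) : h (absStar h hinv w) = max (h w) (h w)⁻¹ := by
  have hpos := hgr.pos w hw
  unfold absStar
  split_ifs with hew
  · rw [hgr.estar_le_iff hw] at hew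
    exact (max_eq_left ((inv_le_one₀ hpos).mpr hew |>.trans hew)).symm
  · rw [hgr.estar_le_iff hw, not_le] at hew
    rw [hgr.h_sinv hw, max_eq_right ((one_lt_inv₀ hpos).mpr hew |>.le |> hew.le.trans)]

theorem h_iterate_star {T s : ℝ} (hT : T ∈ J) (hs : s ∈ J) (n : ℕ) :
    (fun a => star h hinv a T)^[n] s ∈ J ∧
      h ((fun a => star h hinv a T)^[n] s) = h s * h T ^ n := by
  induction n with
  | zero => simpa using hs
  | succ n ih =>
    rw [Function.iterate_succ_apply', hgr.h_star ih.1 hT, ih.2, pow_succ, mul_assoc]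
    exact ⟨hgr.star_mem ih.1 hT, rfl⟩

theorem le_star {a T : ℝ} (ha : a ∈ J) (hT : estar hinv ≤ T) : a ≤ star h hinv a T := by
  have hTJ := hgr.mem_of_estar_le hT
  rw [← hgr.h_le_h_iff ha (hgr.star_mem ha hTJ), hgr.h_star ha hTJ]
  exact le_mul_of_one_le_right (hgr.pos a ha).le ((hgr.estar_le_iff hTJ).mp hT)

theorem mem_starBall_self {t T : ℝ} (ht : t ∈ J) (hT : estar hinv ≤ T) :
    t ∈ starBall J h hinv t T := by
  refine ⟨ht, ?_⟩
  rwa [hgr.star_sinv_self ht, absStar, if_pos le_rfl]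

theorem h_le_mul_of_mem_starBall {t T u : ℝ} (ht : t ∈ J) (hT : T ∈ J)
    (hu : u ∈ starBall J h hinv t T) : h t ≤ h T * h u := by
  obtain ⟨huJ, hdist⟩ := hu
  have hwJ := hgr.star_mem huJ (hgr.sinv_mem ht)
  have hw : h (star h hinv u (sinv h hinv t)) = h u / h t := by
    rw [hgr.h_star huJ (hgr.sinv_mem ht), hgr.h_sinv ht, div_eq_mul_inv]
  have hdist' := (hgr.h_le_h_iff (hgr.absStar_mem hwJ) hT).mpr hdist
  rw [hgr.h_absStar hwJ, hw, inv_div] at hdist'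
  exact (div_le_iff₀ (hgr.pos u huJ)).mp (le_of_max_le_right hdist')

theorem starBall_subset_Ici {a t T : ℝ} (ha : a ∈ J) (hT : T ∈ J) (ht : star h hinv a T ≤ t) :
    starBall J h hinv t T ⊆ Ici a := by
  have htJ := hgr.Ici_subset (hgr.star_mem ha hT) ht
  intro u hu
  have huJ := hu.1
  rw [← hgr.h_le_h_iff (hgr.star_mem ha hT) htJ, hgr.h_star ha hT] at ht
  have hTu := ht.trans (hgr.h_le_mul_of_mem_starBall htJ hT hu)
  rw [mul_comm] at hTu
  exact (hgr.h_le_h_iff ha huJ).mp (le_of_mul_le_mul_left hTu (hgr.pos T hT))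

end GrowthRate

theorem tailSup_star_le {J : Set ℝ} {h hinv : ℝ → ℝ} (hgr : GrowthRate J h hinv)
    {f : ℝ → ℝ} {T θ a : ℝ} (hT : estar hinv ≤ T) (hθ : 0 ≤ θ)
    (hnoncrit : ∀ t, T ≤ t → f t ≤ θ * sSup (f '' starBall J h hinv t T))
    (hf : BddAbove (f '' Ici a)) (ha : estar hinv ≤ a) :
    tailSup f (star h hinv a T) ≤ θ * tailSup f a := by
  have haJ := hgr.mem_of_estar_le ha
  have hTJ := hgr.mem_of_estar_le hT
  refine tailSup_le fun t hat => ?_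
  have htJ := hgr.Ici_subset (hgr.star_mem haJ hTJ) hat
  have hTt : T ≤ t := (hgr.le_star hTJ ha).trans <| by
    rwa [star_comm] at hat
  have hsup : sSup (f '' starBall J h hinv t T) ≤ tailSup f a :=
    csSup_le_csSup hf (Set.Nonempty.image f ⟨t, hgr.mem_starBall_self htJ hT⟩)
      (image_mono (hgr.starBall_subset_Ici haJ hTJ hat))
  exact (hnoncrit t hTt).trans (mul_le_mul_of_nonneg_left hsup hθ)

theorem le_mul_rpow_of_growth_of_noncritical {J : Set ℝ} {h hinv : ℝ → ℝ}
    (hgr : GrowthRate J h hinv) {f : ℝ → ℝ} {T C θ : ℝ} (hT : estar hinv < T)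
    (hθ0 : 0 < θ) (hθ1 : θ < 1) (hf0 : ∀ u, 0 ≤ f u) (hf : BddAbove (f '' Ici (estar hinv)))
    (hgrowth : ∀ s t, estar hinv ≤ s → s ≤ t → t ≤ star h hinv s T → f t ≤ C * f s)
    (hnoncrit : ∀ t, T ≤ t → f t ≤ θ * sSup (f '' starBall J h hinv t T))
    {s t : ℝ} (hs : estar hinv ≤ s) (hst : s ≤ t) :
    f t ≤ θ⁻¹ * C * (h t / h s) ^ (log θ / log (h T)) * f s := by
  have hTJ := hgr.mem_of_estar_le hT.le
  have hsJ := hgr.mem_of_estar_le hs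
  have htJ := hgr.Ici_subset hsJ hst
  have hbdd : ∀ a, estar hinv ≤ a → BddAbove (f '' Ici a) :=
    fun a ha => hf.mono (image_mono (Ici_subset_Ici.mpr ha))
  set φ := fun a => star h hinv a T
  have hφ : MapsTo φ (Ici (estar hinv)) (Ici (estar hinv)) :=
    fun a ha => le_trans ha (hgr.le_star (hgr.mem_of_estar_le ha) hT.le)
  have hdecay : ∀ a ∈ Ici (estar hinv), tailSup f (φ a) ≤ θ * tailSup f a :=
    fun a ha => tailSup_star_le hgr hT.le hθ0.le hnoncrit (hbdd a ha) ha
  have hnear : ∀ a ∈ Ici (estar hinv), tailSup f a ≤ C * f a := by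
    intro a ha
    have ha_le := hgr.le_star (hgr.mem_of_estar_le ha) hT.le
    exact tailSup_le_of_forall_le_of_tailSup_le (hbdd a ha) ha_le hθ1
      ((hf0 a).trans (hgrowth a a ha le_rfl ha_le)) (hgrowth a · ha) (hdecay a ha)
  have hhT : 1 < h T := by
    rw [← hgr.h_estar]; exact hgr.mono hgr.estar_mem hTJ hT
  have hhs := hgr.pos s hsJ
  obtain ⟨n, hn, hθn⟩ := exists_pow_le_and_pow_succ_le_rpow (r := h t / h s)
    ((one_le_div hhs).mpr ((hgr.h_le_h_iff hsJ htJ).mpr hst)) hhT hθ0 hθ1.le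
  obtain ⟨hφnJ, hφn⟩ := hgr.h_iterate_star hTJ hsJ n
  have hφn_le : φ^[n] s ≤ t := by
    rw [← hgr.h_le_h_iff hφnJ htJ, hφn, ← le_div_iff₀' hhs]
    exact hn
  have hCf : 0 ≤ C * f s := (hf0 s).trans ((le_tailSup (hbdd s hs) le_rfl).trans (hnear s hs))
  calc f t ≤ tailSup f (φ^[n] s) := le_tailSup (hbdd _ (hφ.iterate n hs)) hφn_le
    _ ≤ θ ^ n * tailSup f s := apply_iterate_le_pow_mul hφ hθ0.le hdecay hs n
    _ ≤ θ ^ n * (C * f s) := by gcongr; exact hnear s hs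
    _ = θ⁻¹ * θ ^ (n + 1) * (C * f s) := by rw [pow_succ', inv_mul_cancel_left₀ hθ0.ne']
    _ ≤ θ⁻¹ * (h t / h s) ^ (log θ / log (h T)) * (C * f s) := by gcongr
    _ = θ⁻¹ * C * (h t / h s) ^ (log θ / log (h T)) * f s := by ring

theorem statement12_general {J : Set ℝ} {h hinv : ℝ → ℝ} (hgr : GrowthRate J h hinv)
    {E : Type*} [NormedAddCommGroup E] [NormedSpace ℝ E]
    (Φ : ℝ → ℝ → (E →L[ℝ] E))
    (T C θ : ℝ) (hT : estar hinv < T) (hθ0 : 0 < θ) (hθ1 : θ < 1)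
    (ha : ∀ s₀ ∈ J, ∀ ξ : E, ∀ s t : ℝ, estar hinv ≤ s → s ≤ t → t ≤ star h hinv s T →
      ‖(Φ t s₀) ξ‖ ≤ C * ‖(Φ s s₀) ξ‖)
    (hb : ∀ s₀ ∈ J, ∀ ξ : E, ∀ t : ℝ, T ≤ t →
      ‖(Φ t s₀) ξ‖ ≤ θ * sSup ((fun u => ‖(Φ u s₀) ξ‖) ''
        {u | u ∈ J ∧ absStar h hinv (star h hinv u (sinv h hinv t)) ≤ T}))
    (K α : ℝ) (hKdef : K = θ⁻¹ * C) (hαdef : α = -Real.log θ / Real.log (h T)) :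
    ∀ s₀ ∈ J, ∀ ξ : E,
      (∃ B : ℝ, ∀ t ∈ Set.Ici (estar hinv), ‖(Φ t s₀) ξ‖ ≤ B) →
      ∀ s t : ℝ, estar hinv ≤ s → s ≤ t →
        ‖(Φ t s₀) ξ‖ ≤ K * (h t / h s) ^ (-α) * ‖(Φ s s₀) ξ‖ := by
  rintro s₀ hs₀ ξ ⟨B, hB⟩ s t hs hst
  rw [hKdef, hαdef, neg_div, neg_neg]
  exact le_mul_rpow_of_growth_of_noncritical hgr hT hθ0 hθ1 (fun _ => norm_nonneg _)
    ⟨B, forall_mem_image.mpr hB⟩ (ha s₀ hs₀ ξ) (hb s₀ hs₀ ξ) hs hst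

/-- under hypotheses (a) and (b) (as in Statement 11), with
`K = θ⁻¹ C_T` and `α = -ln θ / ln (h T)`, every solution bounded on `[e∗,∞)`
satisfies `|x t| ≤ K (h t / h s)^{-α} |x s|` for all `t ≥ s ≥ e∗`. -/
theorem statement12 {J : Set ℝ} {h hinv : ℝ → ℝ} (hgr : GrowthRate J h hinv)
    {E : Type*} [NormedAddCommGroup E] [NormedSpace ℝ E] [FiniteDimensional ℝ E]
    (Φ : ℝ → ℝ → (E →L[ℝ] E)) (hΦ : IsEvolutionFamily J Φ)
    (T C θ : ℝ) (hT : estar hinv < T) (hC : 1 < C) (hθ0 : 0 < θ) (hθ1 : θ < 1)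
    (ha : ∀ s₀ ∈ J, ∀ ξ : E, ∀ s t : ℝ, estar hinv ≤ s → s ≤ t → t ≤ star h hinv s T →
      ‖(Φ t s₀) ξ‖ ≤ C * ‖(Φ s s₀) ξ‖)
    (hb : ∀ s₀ ∈ J, ∀ ξ : E, ∀ t : ℝ, T ≤ t →
      ‖(Φ t s₀) ξ‖ ≤ θ * sSup ((fun u => ‖(Φ u s₀) ξ‖) ''
        {u | u ∈ J ∧ absStar h hinv (star h hinv u (sinv h hinv t)) ≤ T}))
    (K α : ℝ) (hKdef : K = θ⁻¹ * C) (hαdef : α = -Real.log θ / Real.log (h T)) :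
    ∀ s₀ ∈ J, ∀ ξ : E,
      (∃ B : ℝ, ∀ t ∈ Set.Ici (estar hinv), ‖(Φ t s₀) ξ‖ ≤ B) →
      ∀ s t : ℝ, estar hinv ≤ s → s ≤ t →
        ‖(Φ t s₀) ξ‖ ≤ K * (h t / h s) ^ (-α) * ‖(Φ s s₀) ξ‖ :=
  statement12_general hgr Φ T C θ hT hθ0 hθ1 ha hb K α hKdef hαdef
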